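/- Noether's theorem in coordinates: suppose (u, y) additionally satisfies the Euler–Lagrange equations, i.e. δL_α(x) = Σ_a ∂/∂x^a p_a^α(x) − Σ_{a,γ} Z^γ_{aα}(j(x)) p_a^γ(x) − Σ_A ρ_α^A(x,u(x)) (∂L/∂u^A)(j(x)) = 0 for all α and x, and that the Lagrangian is invariant under the vertical section σ : ℝ^r × ℝ^m → ℝ^k, meaning that for every point (x,u,y) ∈ ℝ^r × ℝ^m × ℝ^{r·k}: Σ_{α,A} σ^α(x,u) ρ_α^A(x,u) (∂L/∂u^A)(x,u,y) + Σ_{a,α} ( (∂σ^α/∂x^a)(x,u) + Σ_A (ρ_a^A(x,u) + Σ_β ρ_β^A(x,u) y_a^β) (∂σ^α/∂u^A)(x,u) + Σ_β Z^α_{aβ}(x,u,y) σ^β(x,u) ) (∂L/∂y_a^α)(x,u,y) = 0. Then the Noether current J with components J^a(x) = Σ_α σ^α(x,u(x)) p_a^α(x) is conserved: Σ_a ∂J^a/∂x^a (x) = 0 for all x ∈ ℝ^r. -/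

import Mathlib

/-- Partial derivative of a scalar function on `ℝ^n` in the `i`-th coordinate
direction. -/
noncomputable def pd {n : ℕ} (f : (Fin n → ℝ) → ℝ) (x : Fin n → ℝ) (i : Fin n) : ℝ :=
  fderiv ℝ f x (Pi.single i 1)

/-- Partial derivative of a scalar function of the jet variables
`y = (y_a^α) ∈ ℝ^{r·k}` in the direction of the coordinate `y_a^α`. -/
noncomputable def pdY {r k : ℕ} (f : (Fin r → Fin k → ℝ) → ℝ) (w : Fin r → Fin k → ℝ)
    (a : Fin r) (α : Fin k) : ℝ :=
  fderiv ℝ f w (Pi.single a (Pi.single α 1))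

/-- The affine structure functions `Z^α_{aβ}(x,u,y) = C^α_{aβ}(x,u) + Σ_γ C^α_{γβ}(x,u) y_a^γ`.
Here `Ca a α β = C^α_{aβ}` and `Cc α γ β = C^α_{γβ}`. -/
def Zaff {r m k : ℕ} (Ca : Fin r → Fin k → Fin k → (Fin r → ℝ) → (Fin m → ℝ) → ℝ)
    (Cc : Fin k → Fin k → Fin k → (Fin r → ℝ) → (Fin m → ℝ) → ℝ)
    (a : Fin r) (α β : Fin k) (x : Fin r → ℝ) (uu : Fin m → ℝ) (yy : Fin r → Fin k → ℝ) : ℝ :=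
  Ca a α β x uu + ∑ γ, Cc α γ β x uu * yy a γ

/-- The momenta `p_a^α(x) = (∂L/∂y_a^α)(x, u(x), y(x))`. -/
noncomputable def momentum {r m k : ℕ}
    (L : (Fin r → ℝ) → (Fin m → ℝ) → (Fin r → Fin k → ℝ) → ℝ)
    (u : (Fin r → ℝ) → Fin m → ℝ) (y : (Fin r → ℝ) → Fin r → Fin k → ℝ)
    (a : Fin r) (α : Fin k) (x : Fin r → ℝ) : ℝ :=
  pdY (fun w => L x (u x) w) (y x) a α

/-- `(∂L/∂u^A)(x, u(x), y(x))`. -/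
noncomputable def Lu {r m k : ℕ}
    (L : (Fin r → ℝ) → (Fin m → ℝ) → (Fin r → Fin k → ℝ) → ℝ)
    (u : (Fin r → ℝ) → Fin m → ℝ) (y : (Fin r → ℝ) → Fin r → Fin k → ℝ)
    (A : Fin m) (x : Fin r → ℝ) : ℝ :=
  pd (fun v => L x v (y x)) (u x) A

/-- The Euler–Lagrange expression
`δL_α(x) = Σ_a ∂/∂x^a p_a^α(x) − Σ_{a,γ} Z^γ_{aα}(j(x)) p_a^γ(x) − Σ_A ρ_α^A(x,u(x)) (∂L/∂u^A)(j(x))`. -/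
noncomputable def deltaL {r m k : ℕ}
    (ρk : Fin k → Fin m → (Fin r → ℝ) → (Fin m → ℝ) → ℝ)
    (Ca : Fin r → Fin k → Fin k → (Fin r → ℝ) → (Fin m → ℝ) → ℝ)
    (Cc : Fin k → Fin k → Fin k → (Fin r → ℝ) → (Fin m → ℝ) → ℝ)
    (L : (Fin r → ℝ) → (Fin m → ℝ) → (Fin r → Fin k → ℝ) → ℝ)
    (u : (Fin r → ℝ) → Fin m → ℝ) (y : (Fin r → ℝ) → Fin r → Fin k → ℝ)
    (α : Fin k) (x : Fin r → ℝ) : ℝ :=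
  (∑ a, pd (fun x' => momentum L u y a α x') x a)
  - (∑ a, ∑ γ, Zaff Ca Cc a γ α x (u x) (y x) * momentum L u y a γ x)
  - ∑ A, ρk α A x (u x) * Lu L u y A x

section NoetherAux

/-- Chain rule for a partial derivative of `x ↦ F (x, u x)`. -/
lemma pd_comp_pair {r m : ℕ} {F : (Fin r → ℝ) × (Fin m → ℝ) → ℝ} (hF : ContDiff ℝ (⊤ : ℕ∞) F)
    {u : (Fin r → ℝ) → Fin m → ℝ} (hu : ContDiff ℝ (⊤ : ℕ∞) u) (x : Fin r → ℝ) (a : Fin r) :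
    pd (fun x' => F (x', u x')) x a
      = pd (fun x' => F (x', u x)) x a
        + ∑ A, pd (fun v => F (x, v)) (u x) A * pd (fun x' => u x' A) x a := by
  set D := fderiv ℝ F (x, u x) with hD
  have hFd : DifferentiableAt ℝ F (x, u x) := hF.differentiable (by simp) _
  have hud : DifferentiableAt ℝ u x := hu.differentiable (by simp) x
  have hg : HasFDerivAt (fun x' => (x', u x'))
      ((ContinuousLinearMap.id ℝ _).prod (fderiv ℝ u x)) x :=
    (hasFDerivAt_id x).prodMk hud.hasFDerivAt
  have h1 : pd (fun x' => F (x', u x')) x a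
      = D (Pi.single a 1, fderiv ℝ u x (Pi.single a 1)) := by
    have h := (hFd.hasFDerivAt.comp x hg).fderiv
    rw [pd, show (fun x' => F (x', u x')) = F ∘ (fun x' => (x', u x')) from rfl, h]
    rfl
  have h2 : pd (fun x' => F (x', u x)) x a = D (Pi.single a 1, 0) := by
    have hg2 : HasFDerivAt (fun x' : Fin r → ℝ => (x', u x))
        ((ContinuousLinearMap.id ℝ _).prod 0) x :=
      (hasFDerivAt_id x).prodMk (hasFDerivAt_const (u x) x)
    have h := (hFd.hasFDerivAt.comp x hg2).fderiv
    rw [pd, show (fun x' => F (x', u x)) = F ∘ (fun x' : Fin r → ℝ => (x', u x)) from rfl, h]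
    rfl
  have h3 : ∀ A, pd (fun v => F (x, v)) (u x) A = D (0, Pi.single A 1) := by
    intro A
    have hg3 : HasFDerivAt (fun v : Fin m → ℝ => (x, v))
        ((0 : (Fin m → ℝ) →L[ℝ] (Fin r → ℝ)).prod (ContinuousLinearMap.id ℝ _)) (u x) :=
      (hasFDerivAt_const x (u x)).prodMk (hasFDerivAt_id (u x))
    have h := (hFd.hasFDerivAt.comp (u x) hg3).fderiv
    rw [pd, show (fun v => F (x, v)) = F ∘ (fun v : Fin m → ℝ => (x, v)) from rfl, h]
    rfl
  have h4 : ∀ A, pd (fun x' => u x' A) x a = fderiv ℝ u x (Pi.single a 1) A := by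
    intro A
    have hc : (fun x' => u x' A)
        = (ContinuousLinearMap.proj A (R := ℝ) (φ := fun _ : Fin m => ℝ)) ∘ u := rfl
    rw [pd, hc, fderiv_comp x (ContinuousLinearMap.proj A).differentiableAt hud]
    simp
  have hsplit : ((Pi.single a 1 : Fin r → ℝ), fderiv ℝ u x (Pi.single a 1))
      = ((Pi.single a 1 : Fin r → ℝ), (0 : Fin m → ℝ))
        + ∑ A, (fderiv ℝ u x (Pi.single a 1) A) •
          (((0 : Fin r → ℝ), Pi.single A (1:ℝ)) : (Fin r → ℝ) × (Fin m → ℝ)) := by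
    rw [Prod.ext_iff]
    constructor
    · simp [Prod.fst_sum]
    · funext B
      simp [Prod.snd_sum, Finset.sum_apply, Pi.single_apply]
  rw [h1, h2, hsplit, map_add, map_sum]
  congr 1
  refine Finset.sum_congr rfl fun A _ => ?_
  rw [map_smul, h3, h4]
  simp [mul_comm]

variable {r m k : ℕ} {G : (Fin r → ℝ) × (Fin m → ℝ) × (Fin r → Fin k → ℝ) → ℝ}

lemma pdY_third (hG : ContDiff ℝ (⊤ : ℕ∞) G) (x : Fin r → ℝ) (uu : Fin m → ℝ)
    (yy : Fin r → Fin k → ℝ) (a : Fin r) (α : Fin k) :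
    pdY (fun w => G (x, uu, w)) yy a α
      = fderiv ℝ G (x, uu, yy) (0, 0, Pi.single a (Pi.single α 1)) := by
  have hGd : DifferentiableAt ℝ G (x, uu, yy) := hG.differentiable (by simp) _
  have hg : HasFDerivAt (fun w : Fin r → Fin k → ℝ => (x, uu, w))
      ((0 : _ →L[ℝ] (Fin r → ℝ)).prod
        (((0 : _ →L[ℝ] (Fin m → ℝ))).prod (ContinuousLinearMap.id ℝ _))) yy :=
    (hasFDerivAt_const x yy).prodMk ((hasFDerivAt_const uu yy).prodMk (hasFDerivAt_id yy))
  have h := (hGd.hasFDerivAt.comp yy hg).fderiv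
  rw [pdY, show (fun w => G (x, uu, w)) = G ∘ (fun w : Fin r → Fin k → ℝ => (x, uu, w)) from rfl, h]
  rfl

lemma pd_second (hG : ContDiff ℝ (⊤ : ℕ∞) G) (x : Fin r → ℝ) (uu : Fin m → ℝ)
    (yy : Fin r → Fin k → ℝ) (A : Fin m) :
    pd (fun v => G (x, v, yy)) uu A
      = fderiv ℝ G (x, uu, yy) (0, Pi.single A 1, 0) := by
  have hGd : DifferentiableAt ℝ G (x, uu, yy) := hG.differentiable (by simp) _
  have hg : HasFDerivAt (fun v : Fin m → ℝ => (x, v, yy))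
      ((0 : _ →L[ℝ] (Fin r → ℝ)).prod
        ((ContinuousLinearMap.id ℝ _).prod (0 : _ →L[ℝ] (Fin r → Fin k → ℝ)))) uu :=
    (hasFDerivAt_const x uu).prodMk ((hasFDerivAt_id uu).prodMk (hasFDerivAt_const yy uu))
  have h := (hGd.hasFDerivAt.comp uu hg).fderiv
  rw [pd, show (fun v => G (x, v, yy)) = G ∘ (fun v : Fin m → ℝ => (x, v, yy)) from rfl, h]
  rfl

lemma smooth_P (hG : ContDiff ℝ (⊤ : ℕ∞) G)
    {u : (Fin r → ℝ) → Fin m → ℝ} {y : (Fin r → ℝ) → Fin r → Fin k → ℝ}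
    (hu : ContDiff ℝ (⊤ : ℕ∞) u) (hy : ContDiff ℝ (⊤ : ℕ∞) y)
    (v : (Fin r → ℝ) × (Fin m → ℝ) × (Fin r → Fin k → ℝ)) :
    ContDiff ℝ (⊤ : ℕ∞) (fun x => fderiv ℝ G (x, u x, y x) v) := by
  have hΦ : ContDiff ℝ (⊤ : ℕ∞) (fun x : Fin r → ℝ => (x, u x, y x)) :=
    contDiff_id.prodMk (hu.prodMk hy)
  have hG' : ContDiff ℝ (⊤ : ℕ∞) (fderiv ℝ G) := hG.fderiv_right (by simp)
  exact (hG'.comp hΦ).clm_apply contDiff_const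

lemma pd_sum_mul {n : ℕ} {ι : Type*} [Fintype ι] {f g : ι → (Fin n → ℝ) → ℝ}
    {x : Fin n → ℝ} (a : Fin n)
    (hf : ∀ i, DifferentiableAt ℝ (f i) x) (hg : ∀ i, DifferentiableAt ℝ (g i) x) :
    pd (fun x' => ∑ i, f i x' * g i x') x a
      = ∑ i, (pd (f i) x a * g i x + f i x * pd (g i) x a) := by
  rw [pd, fderiv_fun_sum (A := fun i x' => f i x' * g i x') (fun i _ => (hf i).mul (hg i))]
  rw [ContinuousLinearMap.sum_apply]
  refine Finset.sum_congr rfl fun i _ => ?_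
  rw [fderiv_fun_mul (hf i) (hg i)]
  simp [pd]
  ring

end NoetherAux


/-- Noether's theorem in coordinates for a Lagrangian field theory on a Lie
algebroid over `F = TN`, `N = ℝ^r`: if the fields `(u, y)` are admissible and
satisfy the Euler–Lagrange equations `δL_α = 0`, and the Lagrangian is invariant
under the vertical section `σ` (at every point `(x,u,y)` of the jet space), then
the Noether current `J^a(x) = Σ_α σ^α(x,u(x)) p_a^α(x)` is conserved:
`Σ_a ∂J^a/∂x^a = 0`. -/
theorem noether_theorem {r m k : ℕ} (hr : 1 ≤ r) (hm : 1 ≤ m) (hk : 1 ≤ k)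
    (ρa : Fin r → Fin m → (Fin r → ℝ) → (Fin m → ℝ) → ℝ)
    (ρk : Fin k → Fin m → (Fin r → ℝ) → (Fin m → ℝ) → ℝ)
    (Ca : Fin r → Fin k → Fin k → (Fin r → ℝ) → (Fin m → ℝ) → ℝ)
    (Cc : Fin k → Fin k → Fin k → (Fin r → ℝ) → (Fin m → ℝ) → ℝ)
    (L : (Fin r → ℝ) → (Fin m → ℝ) → (Fin r → Fin k → ℝ) → ℝ)
    (u : (Fin r → ℝ) → Fin m → ℝ) (y : (Fin r → ℝ) → Fin r → Fin k → ℝ)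
    (hρa : ∀ a A, ContDiff ℝ (⊤ : ℕ∞) (fun q : (Fin r → ℝ) × (Fin m → ℝ) => ρa a A q.1 q.2))
    (hρk : ∀ α A, ContDiff ℝ (⊤ : ℕ∞) (fun q : (Fin r → ℝ) × (Fin m → ℝ) => ρk α A q.1 q.2))
    (hCa : ∀ a α β, ContDiff ℝ (⊤ : ℕ∞) (fun q : (Fin r → ℝ) × (Fin m → ℝ) => Ca a α β q.1 q.2))
    (hCc : ∀ α β γ, ContDiff ℝ (⊤ : ℕ∞) (fun q : (Fin r → ℝ) × (Fin m → ℝ) => Cc α β γ q.1 q.2))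
    (hL : ContDiff ℝ (⊤ : ℕ∞)
      (fun q : (Fin r → ℝ) × (Fin m → ℝ) × (Fin r → Fin k → ℝ) => L q.1 q.2.1 q.2.2))
    (hu : ContDiff ℝ (⊤ : ℕ∞) u) (hy : ContDiff ℝ (⊤ : ℕ∞) y)
    (adm : ∀ (x : Fin r → ℝ) (a : Fin r) (A : Fin m),
      pd (fun x' => u x' A) x a = ρa a A x (u x) + ∑ α, ρk α A x (u x) * y x a α)
    (σ : (Fin r → ℝ) → (Fin m → ℝ) → Fin k → ℝ)
    (hσ : ContDiff ℝ (⊤ : ℕ∞) (fun q : (Fin r → ℝ) × (Fin m → ℝ) => σ q.1 q.2))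
    (euler_lagrange : ∀ (α : Fin k) (x : Fin r → ℝ), deltaL ρk Ca Cc L u y α x = 0)
    (invariant : ∀ (x : Fin r → ℝ) (uu : Fin m → ℝ) (yy : Fin r → Fin k → ℝ),
      (∑ α, ∑ A, σ x uu α * ρk α A x uu * pd (fun v => L x v yy) uu A)
      + (∑ a, ∑ α,
          (pd (fun x' => σ x' uu α) x a
            + (∑ A, (ρa a A x uu + ∑ β, ρk β A x uu * yy a β) * pd (fun v => σ x v α) uu A)
            + ∑ β, Zaff Ca Cc a α β x uu yy * σ x uu β)
          * pdY (fun w => L x uu w) yy a α) = 0) :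
    ∀ x : Fin r → ℝ,
      ∑ a, pd (fun x' => ∑ α, σ x' (u x') α * momentum L u y a α x') x a = 0 := by
  intro x
  set G : (Fin r → ℝ) × (Fin m → ℝ) × (Fin r → Fin k → ℝ) → ℝ :=
    fun q => L q.1 q.2.1 q.2.2 with hGdef
  have hG : ContDiff ℝ (⊤ : ℕ∞) G := hL
  -- momenta as applied derivatives of G
  set P : Fin r → Fin k → (Fin r → ℝ) → ℝ :=
    fun a α x' => fderiv ℝ G (x', u x', y x') (0, 0, Pi.single a (Pi.single α 1)) with hPdef
  have hmom : ∀ a α x', momentum L u y a α x' = P a α x' := by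
    intro a α x'
    exact pdY_third hG x' (u x') (y x') a α
  have hLuV : ∀ (A : Fin m) (x' : Fin r → ℝ),
      Lu L u y A x' = fderiv ℝ G (x', u x', y x') (0, Pi.single A 1, 0) := by
    intro A x'
    exact pd_second hG x' (u x') (y x') A
  -- the composed section
  set S : Fin k → (Fin r → ℝ) → ℝ := fun α x' => σ x' (u x') α with hSdef
  have hσα : ∀ α, ContDiff ℝ (⊤ : ℕ∞) (fun q : (Fin r → ℝ) × (Fin m → ℝ) => σ q.1 q.2 α) := by
    intro α
    exact (ContinuousLinearMap.proj α (R := ℝ) (φ := fun _ : Fin k => ℝ)).contDiff.comp hσ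
  have hS : ∀ α, ContDiff ℝ (⊤ : ℕ∞) (S α) := by
    intro α
    exact (hσα α).comp (contDiff_id.prodMk hu)
  have hP : ∀ a α, ContDiff ℝ (⊤ : ℕ∞) (P a α) := fun a α => smooth_P hG hu hy _
  -- rewrite goal functions
  have hfun : ∀ a, (fun x' => ∑ α, σ x' (u x') α * momentum L u y a α x')
      = (fun x' => ∑ α, S α x' * P a α x') := by
    intro a
    funext x'
    exact Finset.sum_congr rfl fun α _ => by rw [hmom]
  -- Euler–Lagrange in terms of P
  have hEL : ∀ α, (∑ a, pd (P a α) x a)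
      = (∑ a, ∑ γ, Zaff Ca Cc a γ α x (u x) (y x) * P a γ x)
        + ∑ A, ρk α A x (u x) * fderiv ℝ G (x, u x, y x) (0, Pi.single A 1, 0) := by
    intro α
    have h := euler_lagrange α x
    rw [deltaL] at h
    have e1 : ∀ a : Fin r, (fun x' => momentum L u y a α x') = P a α := by
      intro a; funext x'; exact hmom a α x'
    simp only [e1] at h
    simp only [hmom, hLuV] at h
    linarith
  -- expand the goal with the product rule
  have step1 : (∑ a, pd (fun x' => ∑ α, σ x' (u x') α * momentum L u y a α x') x a)
      = ∑ a, ∑ α, (pd (S α) x a * P a α x + S α x * pd (P a α) x a) := by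
    refine Finset.sum_congr rfl fun a _ => ?_
    rw [hfun a]
    exact pd_sum_mul a (fun α => (hS α).differentiable (by simp) x)
      (fun α => (hP a α).differentiable (by simp) x)
  rw [step1]
  rw [Finset.sum_congr rfl fun a (_ : a ∈ Finset.univ) => Finset.sum_add_distrib,
    Finset.sum_add_distrib]
  -- second group via EL
  have step2 : (∑ a, ∑ α, S α x * pd (P a α) x a)
      = (∑ α, S α x * ((∑ a, ∑ γ, Zaff Ca Cc a γ α x (u x) (y x) * P a γ x)
          + ∑ A, ρk α A x (u x) * fderiv ℝ G (x, u x, y x) (0, Pi.single A 1, 0))) := by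
    rw [Finset.sum_comm]
    refine Finset.sum_congr rfl fun α _ => ?_
    rw [← Finset.mul_sum, hEL α]
  rw [step2]
  -- chain rule plus admissibility for the first group
  have hpdS : ∀ (a : Fin r) (α : Fin k), pd (S α) x a
      = pd (fun x' => σ x' (u x) α) x a
        + ∑ A, pd (fun v => σ x v α) (u x) A
            * (ρa a A x (u x) + ∑ β, ρk β A x (u x) * y x a β) := by
    intro a α
    have h := pd_comp_pair (F := fun q => σ q.1 q.2 α) (hσα α) hu x a
    rw [h]
    congr 1
    refine Finset.sum_congr rfl fun A _ => ?_
    rw [adm x a A]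
  -- the invariance identity at the point (x, u x, y x)
  have key := invariant x (u x) (y x)
  have hmom' : ∀ (a : Fin r) (α : Fin k),
      pdY (fun w => L x (u x) w) (y x) a α = P a α x := fun a α => hmom a α x
  have hLu' : ∀ A : Fin m, pd (fun v => L x v (y x)) (u x) A
      = fderiv ℝ G (x, u x, y x) (0, Pi.single A 1, 0) := fun A => hLuV A x
  simp only [hmom', hLu'] at key
  -- final algebra
  have final : (∑ a, ∑ α, pd (S α) x a * P a α x)
      + (∑ α, S α x * ((∑ a, ∑ γ, Zaff Ca Cc a γ α x (u x) (y x) * P a γ x)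
          + ∑ A, ρk α A x (u x) * fderiv ℝ G (x, u x, y x) (0, Pi.single A 1, 0)))
      = (∑ α, ∑ A, σ x (u x) α * ρk α A x (u x)
            * fderiv ℝ G (x, u x, y x) (0, Pi.single A 1, 0))
        + (∑ a, ∑ α,
            (pd (fun x' => σ x' (u x) α) x a
              + (∑ A, (ρa a A x (u x) + ∑ β, ρk β A x (u x) * y x a β)
                  * pd (fun v => σ x v α) (u x) A)
              + ∑ β, Zaff Ca Cc a α β x (u x) (y x) * σ x (u x) β)
            * P a α x) := by
    -- split the Z-term and ρ-term
    have hA3 : (∑ α, S α x * (∑ a, ∑ γ, Zaff Ca Cc a γ α x (u x) (y x) * P a γ x))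
        = ∑ a, ∑ α, (∑ β, Zaff Ca Cc a α β x (u x) (y x) * S β x) * P a α x := by
      simp only [Finset.mul_sum, Finset.sum_mul]
      rw [Finset.sum_comm]
      refine Finset.sum_congr rfl fun a _ => ?_
      rw [Finset.sum_comm]
      exact Finset.sum_congr rfl fun α _ => Finset.sum_congr rfl fun β _ => by ring
    have hA4 : (∑ α, S α x * ∑ A, ρk α A x (u x)
          * fderiv ℝ G (x, u x, y x) (0, Pi.single A 1, 0))
        = ∑ α, ∑ A, σ x (u x) α * ρk α A x (u x)
            * fderiv ℝ G (x, u x, y x) (0, Pi.single A 1, 0) := by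
      refine Finset.sum_congr rfl fun α _ => ?_
      rw [Finset.mul_sum]
      exact Finset.sum_congr rfl fun A _ => by rw [hSdef]; ring
    have hsplit2 : ∀ (a : Fin r) (α : Fin k),
        (∑ A, pd (fun v => σ x v α) (u x) A
            * (ρa a A x (u x) + ∑ β, ρk β A x (u x) * y x a β))
          = (∑ A, ρa a A x (u x) * pd (fun v => σ x v α) (u x) A)
            + ∑ A, (∑ β, ρk β A x (u x) * y x a β) * pd (fun v => σ x v α) (u x) A := by
      intro a α
      rw [← Finset.sum_add_distrib]
      exact Finset.sum_congr rfl fun A _ => by ring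
    simp only [mul_add, add_mul, Finset.sum_add_distrib]
    rw [hA3, hA4]
    simp only [hpdS, hsplit2, add_mul, Finset.sum_add_distrib]
    simp only [hSdef]
    ring
  rw [final, key]
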